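/- arXiv:0711.1960 — 3 statements merged into one kernel-verified Lean document; each statement's English description precedes it below -/
import Mathlib

section
/- Let t > 0, t_- < 0 with t + t_- < 0, μ_u ≤ 1, μ_s ≥ 1. Suppose U : ℝ^{d_u} → ℝ^{d_u} and S : ℝ^{d_s} → ℝ^{d_s} are linear maps with |Uξ| ≤ μ_u|ξ| for all ξ and |Sη| ≥ μ_s|η| for all η. Then there exists a constant C > 0, depending only on t, t_-, d_u, d_s, U, S, such that for all (ξ, η) ∈ ℝ^{d_u} × ℝ^{d_s}: (1 + |Uξ|² + |Sη|²)^{t/2}(1 + |Sη|²)^{t_- /2} ≤ 2^{max(t, -t_- /2)} max(μ_u^t, μ_s^{t+t_-}) (1 + |ξ|² + |η|²)^{t/2}(1 + |η|²)^{t_- /2} + C (1 + |η|²)^{t_- /2}. -/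
/-!
Write `⟨x⟩ = (1 + x²)^{1/2}`; the symbol is `⟨(u, s)⟩^t ⟨s⟩^{t₋}` with `u = |Uξ|`, `s = |Sη|`.
Splitting it as `(⟨(u, s)⟩² / ⟨s⟩²)^{t/2} ⟨s⟩^{t + t₋}` shows that it increases with `|u|` and,
as `t ≥ 0 ≥ t + t₋`, decreases with `|s|`; so we may pass to `u = μ_u |ξ|`, `s = μ_s |η|`.
If `1 + |η|² ≤ μ_u² |ξ|²`, the bracket `⟨(u, s)⟩²` is at most `2 μ_u² ⟨(ξ, η)⟩²`, which gives
the factor `2^{t/2} μ_u^t`. Otherwise the ratio is at most `2`, and `⟨μ_s η⟩^{t + t₋}` is at most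
`2^{-(t + t₋)/2} μ_s^{t + t₋} ⟨η⟩^{t + t₋}` when `|η| ≥ 1`, and at most `1 ≤ 2^{-t₋/2} ⟨η⟩^{t₋}`
on the compact region `|η| < 1`, which the constant `C = 2^{t/2} 2^{-t₋/2}` absorbs.
-/

open Real

noncomputable def anisotropicWeight (t tm u s : ℝ) : ℝ :=
  (1 + u ^ 2 + s ^ 2) ^ (t / 2) * (1 + s ^ 2) ^ (tm / 2)

lemma sq_rpow_div_two {x : ℝ} (hx : 0 ≤ x) (r : ℝ) : (x ^ 2) ^ (r / 2) = x ^ r := by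
  rw [← rpow_two, ← rpow_mul hx, mul_div_cancel₀ r two_ne_zero]

lemma anisotropicWeight_nonneg (t tm u s : ℝ) : 0 ≤ anisotropicWeight t tm u s := by
  unfold anisotropicWeight
  positivity

lemma anisotropicWeight_eq (t tm u s : ℝ) :
    anisotropicWeight t tm u s =
      ((1 + u ^ 2 + s ^ 2) / (1 + s ^ 2)) ^ (t / 2) * (1 + s ^ 2) ^ ((t + tm) / 2) := by
  have hs : 0 < 1 + s ^ 2 := by positivity
  rw [anisotropicWeight, div_rpow (by positivity) hs.le, div_mul_eq_mul_div, mul_div_assoc,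
    ← rpow_sub hs, add_div, add_sub_cancel_left]

section

variable {t tm : ℝ}

lemma anisotropicWeight_le_of_sq_le_left (ht : 0 ≤ t) {u u' : ℝ} (h : u ^ 2 ≤ u' ^ 2) (s : ℝ) :
    anisotropicWeight t tm u s ≤ anisotropicWeight t tm u' s := by
  unfold anisotropicWeight
  gcongr

lemma anisotropicWeight_le_of_sq_le_right (ht : 0 ≤ t) (hsum : t + tm ≤ 0) (u : ℝ) {s s' : ℝ}
    (h : s ^ 2 ≤ s' ^ 2) : anisotropicWeight t tm u s' ≤ anisotropicWeight t tm u s := by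
  have hs : 0 < 1 + s ^ 2 := by positivity
  have hratio : (1 + u ^ 2 + s' ^ 2) / (1 + s' ^ 2) ≤ (1 + u ^ 2 + s ^ 2) / (1 + s ^ 2) := by
    rw [div_le_div_iff₀ (by positivity) hs]
    nlinarith [mul_le_mul_of_nonneg_left h (sq_nonneg u)]
  rw [anisotropicWeight_eq, anisotropicWeight_eq]
  exact mul_le_mul (by gcongr) (rpow_le_rpow_of_nonpos hs (by linarith) (by linarith))
    (by positivity) (by positivity)

lemma anisotropicWeight_le_of_sq_le_one_add_sq (ht : 0 ≤ t) {u s : ℝ} (h : u ^ 2 ≤ 1 + s ^ 2) :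
    anisotropicWeight t tm u s ≤ 2 ^ (t / 2) * (1 + s ^ 2) ^ ((t + tm) / 2) := by
  have hs : 0 < 1 + s ^ 2 := by positivity
  rw [anisotropicWeight_eq]
  gcongr
  rw [div_le_iff₀ hs]
  linarith

lemma anisotropicWeight_mul_left_le (ht : 0 ≤ t) {μ u s : ℝ} (hμ : 0 ≤ μ)
    (h : 1 + s ^ 2 ≤ (μ * u) ^ 2) :
    anisotropicWeight t tm (μ * u) s ≤ 2 ^ (t / 2) * μ ^ t * anisotropicWeight t tm u s := by
  have hbase : 1 + (μ * u) ^ 2 + s ^ 2 ≤ 2 * μ ^ 2 * (1 + u ^ 2 + s ^ 2) := by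
    nlinarith [mul_nonneg (sq_nonneg μ) (add_nonneg zero_le_one (sq_nonneg s))]
  calc anisotropicWeight t tm (μ * u) s
      ≤ (2 * μ ^ 2 * (1 + u ^ 2 + s ^ 2)) ^ (t / 2) * (1 + s ^ 2) ^ (tm / 2) := by
        unfold anisotropicWeight
        gcongr
    _ = 2 ^ (t / 2) * μ ^ t * anisotropicWeight t tm u s := by
        rw [mul_rpow (by positivity) (by positivity), mul_rpow zero_le_two (by positivity),
          sq_rpow_div_two hμ, anisotropicWeight, mul_assoc]

lemma one_add_mul_sq_rpow_le {μ b r : ℝ} (hμ : 0 < μ) (hb : 1 ≤ b ^ 2) (hr : r ≤ 0) :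
    (1 + (μ * b) ^ 2) ^ (r / 2) ≤ 2 ^ (-r / 2) * μ ^ r * (1 + b ^ 2) ^ (r / 2) := by
  calc (1 + (μ * b) ^ 2) ^ (r / 2) ≤ (μ ^ 2 * (1 + b ^ 2) / 2) ^ (r / 2) :=
        rpow_le_rpow_of_nonpos (by positivity)
          (by nlinarith [mul_le_mul_of_nonneg_left hb (sq_nonneg μ)]) (by linarith)
    _ = 2 ^ (-r / 2) * μ ^ r * (1 + b ^ 2) ^ (r / 2) := by
        rw [div_rpow (by positivity) zero_le_two, mul_rpow (by positivity) (by positivity),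
          sq_rpow_div_two hμ.le, neg_div, rpow_neg zero_le_two]
        ring

lemma two_rpow_mul_one_add_mul_sq_rpow_le (ht : 0 ≤ t) (hsum : t + tm ≤ 0) {μ b : ℝ}
    (hμ : 0 < μ) :
    2 ^ (t / 2) * (1 + (μ * b) ^ 2) ^ ((t + tm) / 2) ≤
      max (2 ^ (-tm / 2) * μ ^ (t + tm) * anisotropicWeight t tm 0 b)
        (2 ^ (t / 2) * 2 ^ (-tm / 2) * (1 + b ^ 2) ^ (tm / 2)) := by
  rcases le_or_gt 1 (b ^ 2) with hb | hb
  · refine le_max_of_le_left ?_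
    calc 2 ^ (t / 2) * (1 + (μ * b) ^ 2) ^ ((t + tm) / 2)
        ≤ 2 ^ (t / 2) * (2 ^ (-(t + tm) / 2) * μ ^ (t + tm) * (1 + b ^ 2) ^ ((t + tm) / 2)) := by
          gcongr
          exact one_add_mul_sq_rpow_le hμ hb hsum
      _ = 2 ^ (-tm / 2) * μ ^ (t + tm) * anisotropicWeight t tm 0 b := by
          have htwo : (2 : ℝ) ^ (t / 2) * 2 ^ (-(t + tm) / 2) = 2 ^ (-tm / 2) := by
            rw [← rpow_add zero_lt_two]
            ring_nf
          rw [anisotropicWeight, zero_pow two_ne_zero, add_zero, add_div t tm,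
            rpow_add (by positivity : (0 : ℝ) < 1 + b ^ 2), ← htwo]
          ring
  · refine le_max_of_le_right ?_
    have hdecay : (1 + (μ * b) ^ 2) ^ ((t + tm) / 2) ≤ 1 :=
      rpow_le_one_of_one_le_of_nonpos (by nlinarith) (by linarith)
    have hgrowth : 1 ≤ 2 ^ (-tm / 2) * (1 + b ^ 2) ^ (tm / 2) := by
      calc (1 : ℝ) = 2 ^ (-tm / 2) * 2 ^ (tm / 2) := by
            rw [← rpow_add zero_lt_two, neg_div, neg_add_cancel, rpow_zero]
        _ ≤ 2 ^ (-tm / 2) * (1 + b ^ 2) ^ (tm / 2) :=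
            mul_le_mul_of_nonneg_left
              (rpow_le_rpow_of_nonpos (by positivity) (by linarith) (by linarith)) (by positivity)
    calc 2 ^ (t / 2) * (1 + (μ * b) ^ 2) ^ ((t + tm) / 2) ≤ 2 ^ (t / 2) * 1 := by gcongr
      _ ≤ 2 ^ (t / 2) * (2 ^ (-tm / 2) * (1 + b ^ 2) ^ (tm / 2)) := by gcongr
      _ = 2 ^ (t / 2) * 2 ^ (-tm / 2) * (1 + b ^ 2) ^ (tm / 2) := by ring

lemma anisotropicWeight_le_of_one_add_sq_le (ht : 0 ≤ t) (hsum : t + tm ≤ 0) {μ u s a b : ℝ}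
    (hμ : 0 ≤ μ) (hua : u ^ 2 ≤ (μ * a) ^ 2) (hbs : b ^ 2 ≤ s ^ 2) (h : 1 + b ^ 2 ≤ (μ * a) ^ 2) :
    anisotropicWeight t tm u s ≤ 2 ^ (t / 2) * μ ^ t * anisotropicWeight t tm a b :=
  calc anisotropicWeight t tm u s
      ≤ anisotropicWeight t tm (μ * a) b :=
        (anisotropicWeight_le_of_sq_le_left ht hua s).trans
          (anisotropicWeight_le_of_sq_le_right ht hsum _ hbs)
    _ ≤ 2 ^ (t / 2) * μ ^ t * anisotropicWeight t tm a b := anisotropicWeight_mul_left_le ht hμ h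

lemma anisotropicWeight_le_max_of_sq_le_one_add_sq (ht : 0 ≤ t) (hsum : t + tm ≤ 0)
    {μ u s b : ℝ} (hμ : 0 < μ) (hus : u ^ 2 ≤ 1 + s ^ 2) (hbs : (μ * b) ^ 2 ≤ s ^ 2) :
    anisotropicWeight t tm u s ≤
      max (2 ^ (-tm / 2) * μ ^ (t + tm) * anisotropicWeight t tm 0 b)
        (2 ^ (t / 2) * 2 ^ (-tm / 2) * (1 + b ^ 2) ^ (tm / 2)) :=
  calc anisotropicWeight t tm u s
      ≤ 2 ^ (t / 2) * (1 + s ^ 2) ^ ((t + tm) / 2) :=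
        anisotropicWeight_le_of_sq_le_one_add_sq ht hus
    _ ≤ 2 ^ (t / 2) * (1 + (μ * b) ^ 2) ^ ((t + tm) / 2) :=
        mul_le_mul_of_nonneg_left
          (rpow_le_rpow_of_nonpos (by positivity) (by linarith) (by linarith)) (by positivity)
    _ ≤ _ := two_rpow_mul_one_add_mul_sq_rpow_le ht hsum hμ

theorem anisotropicWeight_le_of_hyperbolic (ht : 0 ≤ t) (hsum : t + tm ≤ 0) {μu μs : ℝ}
    (hμs : 1 ≤ μs) {u s a b : ℝ} (hu : 0 ≤ u) (ha : 0 ≤ a) (hb : 0 ≤ b)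
    (hua : u ≤ μu * a) (hsb : μs * b ≤ s) :
    anisotropicWeight t tm u s ≤
      2 ^ (max t (-tm / 2)) * max (μu ^ t) (μs ^ (t + tm)) * anisotropicWeight t tm a b +
        2 ^ (t / 2) * 2 ^ (-tm / 2) * (1 + b ^ 2) ^ (tm / 2) := by
  have hW : 0 ≤ anisotropicWeight t tm a b := anisotropicWeight_nonneg t tm a b
  have hu2 : u ^ 2 ≤ (μu * a) ^ 2 := pow_le_pow_left₀ hu hua 2
  have hsb2 : (μs * b) ^ 2 ≤ s ^ 2 := pow_le_pow_left₀ (by positivity) hsb 2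
  have hbs : b ^ 2 ≤ s ^ 2 := pow_le_pow_left₀ hb ((le_mul_of_one_le_left hb hμs).trans hsb) 2
  rcases le_or_gt (1 + b ^ 2) ((μu * a) ^ 2) with hlarge | hsmall
  · have hμu : 0 ≤ μu := by
      refine (pos_of_mul_pos_left (lt_of_le_of_ne (hu.trans hua) fun h => ?_) ha).le
      rw [← h] at hlarge
      nlinarith
    refine le_add_of_le_of_nonneg ?_ (by positivity)
    refine (anisotropicWeight_le_of_one_add_sq_le ht hsum hμu hu2 hbs hlarge).trans
      (mul_le_mul_of_nonneg_right (mul_le_mul ?_ (le_max_left _ _) (by positivity)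
        (by positivity)) hW)
    exact rpow_le_rpow_of_exponent_le one_le_two (le_max_of_le_left (by linarith))
  · refine (anisotropicWeight_le_max_of_sq_le_one_add_sq ht hsum (by linarith) (by linarith)
      hsb2).trans (max_le ?_ (le_add_of_nonneg_left (by positivity)))
    refine le_add_of_le_of_nonneg (mul_le_mul (mul_le_mul ?_ (le_max_right _ _)
      (by positivity) (by positivity)) ?_ (anisotropicWeight_nonneg _ _ _ _)
      (mul_nonneg (by positivity) (le_max_of_le_right (by positivity)))) (by positivity)
    · exact rpow_le_rpow_of_exponent_le one_le_two (le_max_right _ _)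
    · exact anisotropicWeight_le_of_sq_le_left ht (pow_le_pow_left₀ le_rfl ha 2) b

end

theorem stmt_4_general (du ds : ℕ) (t tm μu μs : ℝ)
    (ht : 0 < t) (hsum : t + tm < 0)
    (hμs : 1 ≤ μs)
    (U : EuclideanSpace ℝ (Fin du) →ₗ[ℝ] EuclideanSpace ℝ (Fin du))
    (S : EuclideanSpace ℝ (Fin ds) →ₗ[ℝ] EuclideanSpace ℝ (Fin ds))
    (hU : ∀ ξ, ‖U ξ‖ ≤ μu * ‖ξ‖) (hS : ∀ η, μs * ‖η‖ ≤ ‖S η‖) :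
    ∃ C > 0, ∀ (ξ : EuclideanSpace ℝ (Fin du)) (η : EuclideanSpace ℝ (Fin ds)),
      (1 + ‖U ξ‖ ^ 2 + ‖S η‖ ^ 2) ^ (t / 2) * (1 + ‖S η‖ ^ 2) ^ (tm / 2) ≤
        (2 : ℝ) ^ (max t (-tm / 2)) * max (μu ^ t) (μs ^ (t + tm)) *
          ((1 + ‖ξ‖ ^ 2 + ‖η‖ ^ 2) ^ (t / 2) * (1 + ‖η‖ ^ 2) ^ (tm / 2)) +
        C * (1 + ‖η‖ ^ 2) ^ (tm / 2) :=
  ⟨2 ^ (t / 2) * 2 ^ (-tm / 2), by positivity, fun ξ η =>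
    anisotropicWeight_le_of_hyperbolic ht.le hsum.le hμs (norm_nonneg _) (norm_nonneg ξ)
      (norm_nonneg η) (hU ξ) (hS η)⟩

theorem stmt_4 (du ds : ℕ) (t tm μu μs : ℝ)
    (ht : 0 < t) (htm : tm < 0) (hsum : t + tm < 0)
    (hμu : μu ≤ 1) (hμs : 1 ≤ μs)
    (U : EuclideanSpace ℝ (Fin du) →ₗ[ℝ] EuclideanSpace ℝ (Fin du))
    (S : EuclideanSpace ℝ (Fin ds) →ₗ[ℝ] EuclideanSpace ℝ (Fin ds))
    (hU : ∀ ξ, ‖U ξ‖ ≤ μu * ‖ξ‖) (hS : ∀ η, μs * ‖η‖ ≤ ‖S η‖) :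
    ∃ C > 0, ∀ (ξ : EuclideanSpace ℝ (Fin du)) (η : EuclideanSpace ℝ (Fin ds)),
      (1 + ‖U ξ‖ ^ 2 + ‖S η‖ ^ 2) ^ (t / 2) * (1 + ‖S η‖ ^ 2) ^ (tm / 2) ≤
        (2 : ℝ) ^ (max t (-tm / 2)) * max (μu ^ t) (μs ^ (t + tm)) *
          ((1 + ‖ξ‖ ^ 2 + ‖η‖ ^ 2) ^ (t / 2) * (1 + ‖η‖ ^ 2) ^ (tm / 2)) +
        C * (1 + ‖η‖ ^ 2) ^ (tm / 2) :=
  stmt_4_general du ds t tm μu μs ht hsum hμs U S hU hS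
end

section
/- Let T: X → X be a measurable map on a measurable space, let μ be a finite complex measure and λ a complex number with |λ| = 1 such that the pushforward T_*(φ μ) = λ φ μ, where μ is a T-invariant probability measure and φ ∈ L^∞(μ). Then ∫ |φ ∘ T − λ^{-1} φ|² dμ = 0, i.e., φ ∘ T = λ^{-1} φ μ-almost everywhere. -/
/-!
Pairing the eigen-relation `T_*(φ μ) = λ φ μ` with `g = φ̄` gives `∫ φ̄ ∘ T · φ dμ = λ ∫ |φ|² dμ`.
Expanding `‖φ ∘ T - λ⁻¹ φ‖²` as a square in `L²(μ)`, the two square terms are `∫ |φ|²` each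
(invariance of `μ` and `|λ| = 1`) and the cross term is `2 Re (λ⁻¹ · λ ∫ |φ|²) = 2 ∫ |φ|²`,
so the square has integral zero.
-/

open MeasureTheory ComplexConjugate

section

variable {α β G : Type*} [MeasurableSpace α] [MeasurableSpace β] {μ : Measure α} {ν : Measure β}
  [NormedAddCommGroup G]

theorem MeasureTheory.MeasurePreserving.integral_comp_of_aestronglyMeasurable [NormedSpace ℝ G]
    {f : α → β} (hf : MeasurePreserving f μ ν) {g : β → G} (hg : AEStronglyMeasurable g ν) :
    ∫ x, g (f x) ∂μ = ∫ y, g y ∂ν := by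
  rw [← hf.map_eq] at hg ⊢
  exact (integral_map hf.measurable.aemeasurable hg).symm

theorem MeasureTheory.ae_eq_of_integral_norm_sub_sq_eq_zero {f g : α → G}
    (hfg : Integrable (fun x => ‖f x - g x‖ ^ 2) μ) (h : ∫ x, ‖f x - g x‖ ^ 2 ∂μ = 0) :
    f =ᵐ[μ] g := by
  have hsq : (fun x => ‖f x - g x‖ ^ 2) =ᵐ[μ] 0 :=
    (integral_eq_zero_iff_of_nonneg (fun x => by positivity) hfg).1 h
  filter_upwards [hsq] with x hx
  simpa [sub_eq_zero] using hx

end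

section

variable {α 𝕜 E : Type*} [MeasurableSpace α] {μ : Measure α} [RCLike 𝕜]
  [NormedAddCommGroup E] [InnerProductSpace 𝕜 E] {f g : α → E}

theorem MeasureTheory.MemLp.integrable_inner (hf : MemLp f 2 μ) (hg : MemLp g 2 μ) :
    Integrable (fun x => inner 𝕜 (f x) (g x)) μ :=
  (L2.integrable_inner (hf.toLp f) (hg.toLp g)).congr <| by
    filter_upwards [hf.coeFn_toLp, hg.coeFn_toLp] with x hfx hgx
    rw [hfx, hgx]

theorem MeasureTheory.MemLp.integrable_norm_sq (hf : MemLp f 2 μ) :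
    Integrable (fun x => ‖f x‖ ^ 2) μ :=
  (memLp_two_iff_integrable_sq_norm hf.1).1 hf

theorem MeasureTheory.integral_norm_sub_sq (hf : MemLp f 2 μ) (hg : MemLp g 2 μ) :
    ∫ x, ‖f x - g x‖ ^ 2 ∂μ =
      ∫ x, ‖f x‖ ^ 2 ∂μ - 2 * RCLike.re (∫ x, inner 𝕜 (f x) (g x) ∂μ) + ∫ x, ‖g x‖ ^ 2 ∂μ := by
  have hinner := hf.integrable_inner (𝕜 := 𝕜) hg
  simp_rw [norm_sub_sq (𝕜 := 𝕜)]
  rw [integral_add (f := fun x => ‖f x‖ ^ 2 - 2 * RCLike.re (inner 𝕜 (f x) (g x)))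
    (hf.integrable_norm_sq.sub (hinner.re.const_mul 2)) hg.integrable_norm_sq,
    integral_sub hf.integrable_norm_sq (hinner.re.const_mul 2), integral_const_mul,
    integral_re hinner]

end

theorem stmt_10_general {X : Type*} [MeasurableSpace X] (T : X → X)
    (μ : Measure X) [IsProbabilityMeasure μ] (hμ : MeasurePreserving T μ μ)
    (φ : X → ℂ) (hφm : Measurable φ) (hφb : ∃ M, ∀ x, ‖φ x‖ ≤ M)
    (lam : ℂ) (hlam : ‖lam‖ = 1)
    (hpush : ∀ g : X → ℂ, Measurable g → (∃ M, ∀ x, ‖g x‖ ≤ M) →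
      ∫ x, g (T x) * φ x ∂μ = lam * ∫ x, g x * φ x ∂μ) :
    (∫ x, ‖φ (T x) - lam⁻¹ * φ x‖ ^ 2 ∂μ = 0) ∧
      (∀ᵐ x ∂μ, φ (T x) = lam⁻¹ * φ x) := by
  obtain ⟨M, hM⟩ := hφb
  have hφ : MemLp φ 2 μ := .of_bound hφm.aestronglyMeasurable M (.of_forall hM)
  have hφT : MemLp (fun x => φ (T x)) 2 μ := hφ.comp_measurePreserving hμ
  have hlamφ : MemLp (fun x => lam⁻¹ * φ x) 2 μ := hφ.const_mul _
  have hnormT : ∫ x, ‖φ (T x)‖ ^ 2 ∂μ = ∫ x, ‖φ x‖ ^ 2 ∂μ :=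
    hμ.integral_comp_of_aestronglyMeasurable hφ.integrable_norm_sq.1
  have hnormlam : ∀ x, ‖lam⁻¹ * φ x‖ = ‖φ x‖ := fun x => by simp [hlam]
  have hpair : ∫ x, conj (φ (T x)) * φ x ∂μ = lam * ∫ x, ‖φ x‖ ^ 2 ∂μ := by
    rw [hpush (fun x => conj (φ x)) (Complex.continuous_conj.measurable.comp hφm)
      ⟨M, by simpa using hM⟩, ← integral_complex_ofReal]
    simp_rw [Complex.conj_mul', Complex.ofReal_pow]
  have hcross : ∫ x, inner ℂ (φ (T x)) (lam⁻¹ * φ x) ∂μ = ∫ x, ‖φ x‖ ^ 2 ∂μ := by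
    have hlam0 : lam ≠ 0 := by rintro rfl; simp at hlam
    simp_rw [RCLike.inner_apply', mul_left_comm _ lam⁻¹]
    rw [integral_const_mul, hpair, inv_mul_cancel_left₀ hlam0]
  have hzero : ∫ x, ‖φ (T x) - lam⁻¹ * φ x‖ ^ 2 ∂μ = 0 := by
    rw [integral_norm_sub_sq (𝕜 := ℂ) hφT hlamφ, hcross, hnormT]
    simp only [hnormlam, RCLike.re_to_complex, Complex.ofReal_re]
    ring
  exact ⟨hzero, ae_eq_of_integral_norm_sub_sq_eq_zero (hφT.sub hlamφ).integrable_norm_sq hzero⟩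

theorem stmt_10 {X : Type*} [MeasurableSpace X] (T : X → X) (hT : Measurable T)
    (μ : Measure X) [IsProbabilityMeasure μ] (hμ : MeasurePreserving T μ μ)
    (φ : X → ℂ) (hφm : Measurable φ) (hφb : ∃ M, ∀ x, ‖φ x‖ ≤ M)
    (lam : ℂ) (hlam : ‖lam‖ = 1)
    (hpush : ∀ g : X → ℂ, Measurable g → (∃ M, ∀ x, ‖g x‖ ≤ M) →
      ∫ x, g (T x) * φ x ∂μ = lam * ∫ x, g x * φ x ∂μ) :
    (∫ x, ‖φ (T x) - lam⁻¹ * φ x‖ ^ 2 ∂μ = 0) ∧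
      (∀ᵐ x ∂μ, φ (T x) = lam⁻¹ * φ x) :=
  stmt_10_general T μ hμ φ hφm hφb lam hlam hpush
end

section
/- Let f: X → ℝ be bounded and T: X → X a map; write S_n f = Σ_{j=0}^{n-1} f∘T^j. Assume there exist constants a ∈ ℝ, C > 0 and δ ∈ (0,1) and a finite measure ν such that for all i, j ≥ 0: |∫ (f∘T^i)(f∘T^{i+j}) dν − a| ≤ C(δ^i + δ^j). Then there is C' > 0 such that for all n, m ≥ 1: |∫ (S_n f/n)(S_m f/m) dν − a| ≤ C'(1/n + 1/m); consequently ∫ |S_n f/n − S_m f/m|² dν ≤ 3C'(1/n + 1/m). -/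
/-!
Expanding the product of the Birkhoff sums, `∫ (Sₙf/n)(Sₘf/m) dν - a` is the average over
`i < n`, `j < m` of the correlation errors, and the hypothesis together with the symmetry of the
correlations bounds each of them by `C (δ^i + δ^j + δ^|i-j|)`. Each of the three geometric
families sums to `O(n + m)`, which after dividing by `nm` gives `O(1/n + 1/m)`. The `L²` bound
follows by expanding `|Aₙ - Aₘ|² = Aₙ² - 2AₙAₘ + Aₘ²` and applying the first bound to the pairs
`(n, n)`, `(n, m)` and `(m, m)`.
-/

open MeasureTheory Finset

section Geometric

variable {δ : ℝ}

lemma sum_pow_le_of_injOn {ι : Type*} (hδ0 : 0 ≤ δ) (hδ1 : δ < 1) {s : Finset ι} {g : ι → ℕ}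
    (hg : Set.InjOn g s) : ∑ j ∈ s, δ ^ g j ≤ (1 - δ)⁻¹ := by
  rw [← sum_image hg, ← tsum_geometric_of_lt_one hδ0 hδ1]
  exact (summable_geometric_of_lt_one hδ0 hδ1).sum_le_tsum _ fun k _ => pow_nonneg hδ0 k

lemma sum_range_pow_le (hδ0 : 0 ≤ δ) (hδ1 : δ < 1) (n : ℕ) :
    ∑ i ∈ range n, δ ^ i ≤ (1 - δ)⁻¹ :=
  sum_pow_le_of_injOn hδ0 hδ1 (g := id) (Set.injOn_id _)

/-- `Nat.dist i` is injective on each side of `i`, so each side contributes a geometric sum. -/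
lemma sum_range_pow_dist_le (hδ0 : 0 ≤ δ) (hδ1 : δ < 1) (i m : ℕ) :
    ∑ j ∈ range m, δ ^ Nat.dist i j ≤ 2 * (1 - δ)⁻¹ := by
  rw [← sum_filter_add_sum_filter_not (range m) (· ≤ i), two_mul]
  refine add_le_add (sum_pow_le_of_injOn hδ0 hδ1 ?_) (sum_pow_le_of_injOn hδ0 hδ1 ?_) <;>
  · intro j hj k hk hjk
    simp only [mem_coe, mem_filter, Nat.dist] at hj hk hjk
    omega

lemma sum_range_sum_range_pow_le (hδ0 : 0 ≤ δ) (hδ1 : δ < 1) (n m : ℕ) :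
    ∑ i ∈ range n, ∑ j ∈ range m, (δ ^ i + δ ^ j + δ ^ Nat.dist i j)
      ≤ 3 * (1 - δ)⁻¹ * (n + m) := by
  simp only [sum_add_distrib, sum_const, card_range, nsmul_eq_mul, ← mul_sum]
  have hdist : ∑ i ∈ range n, ∑ j ∈ range m, δ ^ Nat.dist i j ≤ n * (2 * (1 - δ)⁻¹) := by
    simpa using sum_le_card_nsmul (range n) _ _ fun i _ => sum_range_pow_dist_le hδ0 hδ1 i m
  have hn := mul_le_mul_of_nonneg_left (sum_range_pow_le hδ0 hδ1 n) (Nat.cast_nonneg m)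
  have hm := mul_le_mul_of_nonneg_left (sum_range_pow_le hδ0 hδ1 m) (Nat.cast_nonneg n)
  have hK : 0 ≤ (1 - δ)⁻¹ := inv_nonneg.mpr (by linarith)
  linarith [mul_nonneg (Nat.cast_nonneg (α := ℝ) m) hK]

end Geometric

section Correlations

variable {c : ℕ → ℕ → ℝ} {a C δ : ℝ}

lemma abs_sub_le_add_pow_dist (hsymm : ∀ i j, c i j = c j i)
    (hc : ∀ i k, |c i (i + k) - a| ≤ C * (δ ^ i + δ ^ k)) (hC : 0 ≤ C) (hδ : 0 ≤ δ) (i j : ℕ) :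
    |c i j - a| ≤ C * (δ ^ i + δ ^ j + δ ^ Nat.dist i j) := by
  wlog hij : i ≤ j generalizing i j
  · rw [hsymm, Nat.dist_comm, add_comm (δ ^ i)]
    exact this j i (by omega)
  obtain ⟨k, rfl⟩ := Nat.exists_eq_add_of_le hij
  rw [Nat.dist_eq_sub_of_le hij, Nat.add_sub_cancel_left]
  exact (hc i k).trans
    (mul_le_mul_of_nonneg_left (by linarith [pow_nonneg hδ (i + k)]) hC)

lemma abs_sum_range_sum_range_div_sub_le
    (hc : ∀ i j, |c i j - a| ≤ C * (δ ^ i + δ ^ j + δ ^ Nat.dist i j))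
    (hC : 0 ≤ C) (hδ0 : 0 ≤ δ) (hδ1 : δ < 1) {n m : ℕ} (hn : 0 < n) (hm : 0 < m) :
    |(∑ i ∈ range n, ∑ j ∈ range m, c i j) / (n * m) - a|
      ≤ 3 * C * (1 - δ)⁻¹ * (1 / n + 1 / m) := by
  have hnm : (0 : ℝ) < n * m := by positivity
  have hcenter : (∑ i ∈ range n, ∑ j ∈ range m, c i j) / (n * m) - a
      = (∑ i ∈ range n, ∑ j ∈ range m, (c i j - a)) / (n * m) := by
    simp only [sum_sub_distrib, sum_const, card_range, nsmul_eq_mul]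
    field_simp
  have hsum : |∑ i ∈ range n, ∑ j ∈ range m, (c i j - a)|
      ≤ C * ∑ i ∈ range n, ∑ j ∈ range m, (δ ^ i + δ ^ j + δ ^ Nat.dist i j) := by
    simp only [mul_sum]
    exact (abs_sum_le_sum_abs _ _).trans <| sum_le_sum fun i _ =>
      (abs_sum_le_sum_abs _ _).trans <| sum_le_sum fun j _ => hc i j
  calc |(∑ i ∈ range n, ∑ j ∈ range m, c i j) / (n * m) - a|
      = |∑ i ∈ range n, ∑ j ∈ range m, (c i j - a)| / (n * m) := by
        rw [hcenter, abs_div, abs_of_pos hnm]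
    _ ≤ C * (3 * (1 - δ)⁻¹ * (n + m)) / (n * m) := by
        gcongr
        exact hsum.trans (mul_le_mul_of_nonneg_left (sum_range_sum_range_pow_le hδ0 hδ1 n m) hC)
    _ = 3 * C * (1 - δ)⁻¹ * (1 / n + 1 / m) := by
        field_simp
        ring

end Correlations

lemma birkhoffSum_div_mul_birkhoffSum_div {X : Type*} (T : X → X) (f : X → ℝ) (n m : ℕ) (x : X) :
    birkhoffSum T f n x / n * (birkhoffSum T f m x / m)
      = (∑ i ∈ range n, ∑ j ∈ range m, f (T^[i] x) * f (T^[j] x)) / (n * m) := by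
  rw [div_mul_div_comm, birkhoffSum, birkhoffSum, sum_mul_sum]

section Birkhoff

variable {X : Type*} [MeasurableSpace X] {ν : Measure X} [IsFiniteMeasure ν]
  {T : X → X} {f : X → ℝ} {M : ℝ}

lemma integrable_mul_of_abs_le {g h : X → ℝ} {N : ℝ} (hg : Measurable g) (hh : Measurable h)
    (hgM : ∀ x, |g x| ≤ M) (hhN : ∀ x, |h x| ≤ N) : Integrable (fun x => g x * h x) ν :=
  Integrable.of_bound (hg.mul hh).aestronglyMeasurable (M * N) <| ae_of_all _ fun x => by
    rw [Real.norm_eq_abs, abs_mul]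
    exact mul_le_mul (hgM x) (hhN x) (abs_nonneg _) ((abs_nonneg _).trans (hgM x))

lemma integrable_iterate_mul_iterate (hT : Measurable T) (hfm : Measurable f)
    (hfM : ∀ x, |f x| ≤ M) (i j : ℕ) : Integrable (fun x => f (T^[i] x) * f (T^[j] x)) ν :=
  integrable_mul_of_abs_le (hfm.comp (hT.iterate i)) (hfm.comp (hT.iterate j))
    (fun _ => hfM _) (fun _ => hfM _)

lemma integrable_birkhoffSum_div_mul (hT : Measurable T) (hfm : Measurable f)
    (hfM : ∀ x, |f x| ≤ M) (n m : ℕ) :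
    Integrable (fun x => birkhoffSum T f n x / n * (birkhoffSum T f m x / m)) ν := by
  simp only [birkhoffSum_div_mul_birkhoffSum_div]
  exact (integrable_finsetSum _ fun i _ => integrable_finsetSum _ fun j _ =>
    integrable_iterate_mul_iterate hT hfm hfM i j).div_const _

lemma integral_birkhoffSum_div_mul (hT : Measurable T) (hfm : Measurable f)
    (hfM : ∀ x, |f x| ≤ M) (n m : ℕ) :
    ∫ x, birkhoffSum T f n x / n * (birkhoffSum T f m x / m) ∂ν
      = (∑ i ∈ range n, ∑ j ∈ range m, ∫ x, f (T^[i] x) * f (T^[j] x) ∂ν) / (n * m) := by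
  simp only [birkhoffSum_div_mul_birkhoffSum_div]
  rw [integral_div, integral_finsetSum _ fun i _ => integrable_finsetSum _ fun j _ =>
    integrable_iterate_mul_iterate hT hfm hfM i j]
  simp only [integral_finsetSum _ fun j _ => integrable_iterate_mul_iterate hT hfm hfM _ j]

end Birkhoff

lemma integral_sq_abs_sub_le {X : Type*} [MeasurableSpace X] {ν : Measure X} {u v : X → ℝ}
    {a ε₁ ε₂ ε₃ : ℝ} (huu : Integrable (fun x => u x * u x) ν)
    (huv : Integrable (fun x => u x * v x) ν) (hvv : Integrable (fun x => v x * v x) ν)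
    (h₁ : |∫ x, u x * u x ∂ν - a| ≤ ε₁) (h₂ : |∫ x, u x * v x ∂ν - a| ≤ ε₂)
    (h₃ : |∫ x, v x * v x ∂ν - a| ≤ ε₃) :
    ∫ x, |u x - v x| ^ 2 ∂ν ≤ ε₁ + 2 * ε₂ + ε₃ := by
  have hsub : Integrable (fun x => u x * u x - 2 * (u x * v x)) ν := huu.sub (huv.const_mul 2)
  calc ∫ x, |u x - v x| ^ 2 ∂ν = ∫ x, (u x * u x - 2 * (u x * v x)) + v x * v x ∂ν := by
        congr 1 with x
        rw [sq_abs]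
        ring
    _ = ∫ x, u x * u x ∂ν - 2 * ∫ x, u x * v x ∂ν + ∫ x, v x * v x ∂ν := by
        rw [integral_add hsub hvv, integral_sub huu (huv.const_mul 2), integral_const_mul]
    _ ≤ ε₁ + 2 * ε₂ + ε₃ := by
        linarith [(abs_le.mp h₁).2, (abs_le.mp h₂).1, (abs_le.mp h₃).2]

theorem stmt_13 {X : Type*} [MeasurableSpace X] (ν : Measure X) [IsFiniteMeasure ν]
    (T : X → X) (hT : Measurable T)
    (f : X → ℝ) (hfm : Measurable f) (hfb : ∃ M, ∀ x, |f x| ≤ M)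
    (a C δ : ℝ) (hC : 0 < C) (hδ0 : 0 < δ) (hδ1 : δ < 1)
    (hcorr : ∀ i j : ℕ,
      |∫ x, f (T^[i] x) * f (T^[i + j] x) ∂ν - a| ≤ C * (δ ^ i + δ ^ j)) :
    ∃ C' > 0, ∀ n m : ℕ, 1 ≤ n → 1 ≤ m →
      |∫ x, ((∑ j ∈ range n, f (T^[j] x)) / n) *
            ((∑ j ∈ range m, f (T^[j] x)) / m) ∂ν - a| ≤ C' * (1 / n + 1 / m) ∧
      ∫ x, |(∑ j ∈ range n, f (T^[j] x)) / n -
            (∑ j ∈ range m, f (T^[j] x)) / m| ^ 2 ∂ν ≤ 3 * C' * (1 / n + 1 / m) := by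
  obtain ⟨M, hfM⟩ := hfb
  set D := 3 * C * (1 - δ)⁻¹
  have hD : 0 < D := mul_pos (by positivity) (inv_pos.mpr (by linarith))
  have hsymm (i j : ℕ) : ∫ x, f (T^[i] x) * f (T^[j] x) ∂ν = ∫ x, f (T^[j] x) * f (T^[i] x) ∂ν :=
    integral_congr_ae (ae_of_all _ fun x => mul_comm _ _)
  have hcorr' := abs_sub_le_add_pow_dist hsymm hcorr hC.le hδ0.le
  have hmean : ∀ n m : ℕ, 1 ≤ n → 1 ≤ m →
      |∫ x, birkhoffSum T f n x / n * (birkhoffSum T f m x / m) ∂ν - a| ≤ D * (1 / n + 1 / m) :=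
    fun n m hn hm => by
      rw [integral_birkhoffSum_div_mul hT hfm hfM]
      exact abs_sum_range_sum_range_div_sub_le hcorr' hC.le hδ0.le hδ1 hn hm
  refine ⟨2 * D, by linarith, fun n m hn hm => ?_⟩
  have hD' : 0 ≤ D * (1 / n + 1 / m) := by positivity
  constructor
  · exact (hmean n m hn hm).trans (by linarith)
  · have hint := integrable_birkhoffSum_div_mul (ν := ν) hT hfm hfM
    have hL2 := integral_sq_abs_sub_le (hint n n) (hint n m) (hint m m)
      (hmean n n hn hn) (hmean n m hn hm) (hmean m m hm hm)
    exact hL2.trans (by linarith)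
end
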